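/- arXiv:1710.10309 — 5 statements merged into one kernel-verified Lean document; each statement's English description precedes it below -/
import Mathlib

section
/- Let 𝒜 ⊆ ℝ^m be a compact set, let A : ℝ^d × 𝒜 → Sym_d(ℝ) and h : ℝ^d × 𝒜 → ℝ be continuous and ℤ^d-periodic in the first variable. Let Q ∈ Sym_d(ℝ), c ∈ ℝ, and let u : ℝ^d → ℝ be a C², ℤ^d-periodic function such that sup_{α∈𝒜} ( −A(y,α):(Q + D²u(y)) + h(y,α) ) = c for every y ∈ ℝ^d. Let ρ be a Borel probability measure on [0,1]^d × 𝒜 satisfying the invariance condition ∫ A(y,α):D²φ(y) dρ(y,α) = 0 for every C², ℤ^d-periodic φ : ℝ^d → ℝ. Then ∫ ( −A(y,α):Q + h(y,α) ) dρ(y,α) ≤ c. -/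
/-!
Evaluating the cell equation at the control `α` itself gives
`−A(y,α):Q + h(y,α) ≤ c + A(y,α):D²u(y)` on `[0,1]^d × 𝒜`, which carries `ρ`. Integrating against
`ρ` and using invariance with the test function `φ = u` kills the Hessian term.
-/

open MeasureTheory Matrix

/-- Frobenius inner product `M:N = tr(Mᵀ N)` of two square matrices. -/
noncomputable def frob {d : ℕ} (M N : Matrix (Fin d) (Fin d) ℝ) : ℝ :=
  (Mᵀ * N).trace

/-- Hessian matrix `D²u(y)` of a function `u : ℝ^d → ℝ`. -/
noncomputable def hessian {d : ℕ} (u : (Fin d → ℝ) → ℝ) (y : Fin d → ℝ) :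
    Matrix (Fin d) (Fin d) ℝ :=
  Matrix.of fun i j => fderiv ℝ (fun z => fderiv ℝ u z (Pi.single j 1)) y (Pi.single i 1)

theorem frob_add_right {d : ℕ} (M N P : Matrix (Fin d) (Fin d) ℝ) :
    frob M (N + P) = frob M N + frob M P := by
  simp [frob, Matrix.mul_add]

theorem continuous_frob {d : ℕ} :
    Continuous fun p : Matrix (Fin d) (Fin d) ℝ × Matrix (Fin d) (Fin d) ℝ => frob p.1 p.2 :=
  (continuous_fst.matrix_transpose.matrix_mul continuous_snd).matrix_trace

theorem ContinuousOn.frob {d : ℕ} {X : Type*} [TopologicalSpace X] {s : Set X}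
    {f g : X → Matrix (Fin d) (Fin d) ℝ} (hf : ContinuousOn f s) (hg : ContinuousOn g s) :
    ContinuousOn (fun x => _root_.frob (f x) (g x)) s :=
  continuous_frob.comp_continuousOn (f := fun x => (f x, g x)) (hf.prodMk hg)

theorem ContDiff.continuous_hessian {d : ℕ} {u : (Fin d → ℝ) → ℝ} (hu : ContDiff ℝ 2 u) :
    Continuous (hessian u) := by
  refine continuous_matrix fun i j => ?_
  have hDu : ContDiff ℝ 1 fun z => fderiv ℝ u z (Pi.single j 1) :=
    (hu.fderiv_right (by norm_num)).clm_apply contDiff_const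
  exact (hDu.continuous_fderiv one_ne_zero).clm_apply continuous_const

theorem le_of_sSup_image_eq {X : Type*} [TopologicalSpace X] {s : Set X} (hs : IsCompact s)
    {g : X → ℝ} (hg : ContinuousOn g s) {c : ℝ} (hc : sSup (g '' s) = c) {x : X} (hx : x ∈ s) :
    g x ≤ c :=
  hc ▸ le_csSup (hs.bddAbove_image hg) (Set.mem_image_of_mem g hx)

theorem ContinuousOn.integrable_of_measure_compl_eq_zero {X E : Type*} [MeasurableSpace X]
    [TopologicalSpace X] [OpensMeasurableSpace X] [T2Space X] [NormedAddCommGroup E]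
    {μ : Measure X} [IsFiniteMeasureOnCompacts μ] {K : Set X} {f : X → E}
    (hf : ContinuousOn f K) (hK : IsCompact K) (hμK : μ Kᶜ = 0) : Integrable f μ := by
  rw [← Measure.restrict_eq_self_of_ae_mem (ae_iff.2 hμK)]
  exact hf.integrableOn_compact hK

theorem integral_le_of_ae_le_add {α : Type*} [MeasurableSpace α] {μ : Measure α}
    [IsProbabilityMeasure μ] {f g : α → ℝ} {c : ℝ} (hf : Integrable f μ) (hg : Integrable g μ)
    (hg0 : ∫ x, g x ∂μ = 0) (hfg : ∀ᵐ x ∂μ, f x ≤ c + g x) : ∫ x, f x ∂μ ≤ c := by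
  calc ∫ x, f x ∂μ ≤ ∫ x, (c + g x) ∂μ := integral_mono_ae hf ((integrable_const c).add hg) hfg
    _ = c := by simp [integral_add (integrable_const c) hg, hg0]

theorem le_add_frob_of_sSup_eq {d m : ℕ} {𝓐 : Set (Fin m → ℝ)} (h𝓐 : IsCompact 𝓐)
    {A : (Fin d → ℝ) → (Fin m → ℝ) → Matrix (Fin d) (Fin d) ℝ}
    {h : (Fin d → ℝ) → (Fin m → ℝ) → ℝ}
    (hAcont : ContinuousOn (fun p : (Fin d → ℝ) × (Fin m → ℝ) => A p.1 p.2) (Set.univ ×ˢ 𝓐))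
    (hhcont : ContinuousOn (fun p : (Fin d → ℝ) × (Fin m → ℝ) => h p.1 p.2) (Set.univ ×ˢ 𝓐))
    {Q N : Matrix (Fin d) (Fin d) ℝ} {c : ℝ}
    {y : Fin d → ℝ} (hc : sSup ((fun α => -frob (A y α) (Q + N) + h y α) '' 𝓐) = c)
    {α : Fin m → ℝ} (hα : α ∈ 𝓐) :
    -frob (A y α) Q + h y α ≤ c + frob (A y α) N := by
  have hslice : Set.MapsTo (fun α => (y, α)) 𝓐 (Set.univ ×ˢ 𝓐) :=
    fun _ hα => ⟨Set.mem_univ y, hα⟩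
  have hA : ContinuousOn (A y) 𝓐 :=
    hAcont.comp (Continuous.prodMk_right y).continuousOn hslice
  have hh : ContinuousOn (h y) 𝓐 :=
    hhcont.comp (Continuous.prodMk_right y).continuousOn hslice
  have hle := le_of_sSup_image_eq (g := fun α => -frob (A y α) (Q + N) + h y α) h𝓐
    ((hA.frob continuousOn_const).neg.add hh) hc hα
  rw [frob_add_right] at hle
  linarith

theorem stmt_0_general {d m : ℕ}
    (𝓐 : Set (Fin m → ℝ)) (h𝓐 : IsCompact 𝓐)
    (A : (Fin d → ℝ) → (Fin m → ℝ) → Matrix (Fin d) (Fin d) ℝ)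
    (h : (Fin d → ℝ) → (Fin m → ℝ) → ℝ)
    (hAcont : ContinuousOn (fun p : (Fin d → ℝ) × (Fin m → ℝ) => A p.1 p.2)
      (Set.univ ×ˢ 𝓐))
    (hhcont : ContinuousOn (fun p : (Fin d → ℝ) × (Fin m → ℝ) => h p.1 p.2)
      (Set.univ ×ˢ 𝓐))
    (Q : Matrix (Fin d) (Fin d) ℝ) (c : ℝ)
    (u : (Fin d → ℝ) → ℝ) (hu : ContDiff ℝ 2 u)
    (huper : ∀ (k : Fin d → ℤ) (y : Fin d → ℝ), u (y + fun i => (k i : ℝ)) = u y)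
    (hcell : ∀ y : Fin d → ℝ,
      sSup ((fun α => -frob (A y α) (Q + hessian u y) + h y α) '' 𝓐) = c)
    (ρ : Measure ((Fin d → ℝ) × (Fin m → ℝ))) [IsProbabilityMeasure ρ]
    (hsupp : ρ ((Set.Icc (0 : Fin d → ℝ) 1 ×ˢ 𝓐)ᶜ) = 0)
    (hinv : ∀ φ : (Fin d → ℝ) → ℝ, ContDiff ℝ 2 φ →
      (∀ (k : Fin d → ℤ) (y : Fin d → ℝ), φ (y + fun i => (k i : ℝ)) = φ y) →
      ∫ p, frob (A p.1 p.2) (hessian φ p.1) ∂ρ = 0) :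
    ∫ p, (-frob (A p.1 p.2) Q + h p.1 p.2) ∂ρ ≤ c := by
  have hK : IsCompact (Set.Icc (0 : Fin d → ℝ) 1 ×ˢ 𝓐) := isCompact_Icc.prod h𝓐
  have hKsub : Set.Icc (0 : Fin d → ℝ) 1 ×ˢ 𝓐 ⊆ Set.univ ×ˢ 𝓐 :=
    Set.prod_mono (Set.subset_univ _) le_rfl
  have hAK := hAcont.mono hKsub
  have hL : Integrable (fun p => -frob (A p.1 p.2) Q + h p.1 p.2) ρ :=
    ((hAK.frob continuousOn_const).neg.add
      (hhcont.mono hKsub)).integrable_of_measure_compl_eq_zero hK hsupp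
  have hHess : Integrable (fun p => frob (A p.1 p.2) (hessian u p.1)) ρ :=
    (hAK.frob (hu.continuous_hessian.comp continuous_fst).continuousOn
      ).integrable_of_measure_compl_eq_zero hK hsupp
  refine integral_le_of_ae_le_add hL hHess (hinv u hu huper) ?_
  filter_upwards [ae_iff.2 hsupp] with p hp
  exact le_add_frob_of_sSup_eq h𝓐 hAcont hhcont (hcell p.1) hp.2

/-- Weak duality: the average of `L_α(Q,y) = −A(y,α):Q + h(y,α)` against any invariant
probability measure `ρ` is at most the homogenized value `c = H̄(Q)` of the cell problem. -/
theorem stmt_0 {d m : ℕ}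
    (𝓐 : Set (Fin m → ℝ)) (h𝓐 : IsCompact 𝓐)
    (A : (Fin d → ℝ) → (Fin m → ℝ) → Matrix (Fin d) (Fin d) ℝ)
    (h : (Fin d → ℝ) → (Fin m → ℝ) → ℝ)
    (hAsym : ∀ (y : Fin d → ℝ), ∀ α ∈ 𝓐, (A y α)ᵀ = A y α)
    (hAcont : ContinuousOn (fun p : (Fin d → ℝ) × (Fin m → ℝ) => A p.1 p.2)
      (Set.univ ×ˢ 𝓐))
    (hhcont : ContinuousOn (fun p : (Fin d → ℝ) × (Fin m → ℝ) => h p.1 p.2)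
      (Set.univ ×ˢ 𝓐))
    (hAper : ∀ (k : Fin d → ℤ) (y : Fin d → ℝ) (α : Fin m → ℝ),
      A (y + fun i => (k i : ℝ)) α = A y α)
    (hhper : ∀ (k : Fin d → ℤ) (y : Fin d → ℝ) (α : Fin m → ℝ),
      h (y + fun i => (k i : ℝ)) α = h y α)
    (Q : Matrix (Fin d) (Fin d) ℝ) (hQ : Qᵀ = Q) (c : ℝ)
    (u : (Fin d → ℝ) → ℝ) (hu : ContDiff ℝ 2 u)
    (huper : ∀ (k : Fin d → ℤ) (y : Fin d → ℝ), u (y + fun i => (k i : ℝ)) = u y)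
    (hcell : ∀ y : Fin d → ℝ,
      sSup ((fun α => -frob (A y α) (Q + hessian u y) + h y α) '' 𝓐) = c)
    (ρ : Measure ((Fin d → ℝ) × (Fin m → ℝ))) [IsProbabilityMeasure ρ]
    (hsupp : ρ ((Set.Icc (0 : Fin d → ℝ) 1 ×ˢ 𝓐)ᶜ) = 0)
    (hinv : ∀ φ : (Fin d → ℝ) → ℝ, ContDiff ℝ 2 φ →
      (∀ (k : Fin d → ℤ) (y : Fin d → ℝ), φ (y + fun i => (k i : ℝ)) = φ y) →
      ∫ p, frob (A p.1 p.2) (hessian φ p.1) ∂ρ = 0) :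
    ∫ p, (-frob (A p.1 p.2) Q + h p.1 p.2) ∂ρ ≤ c :=
  stmt_0_general 𝓐 h𝓐 A h hAcont hhcont Q c u hu huper hcell ρ hsupp hinv
end

section
/- Let 𝒜 ⊆ ℝ^m be a compact set, let A : ℝ × 𝒜 → ℝ and h : ℝ × 𝒜 → ℝ be continuous, 1-periodic in the first variable, with 0 < λ ≤ A(y,β) ≤ Λ for all (y,β). Let α : ℝ → 𝒜 be measurable and 1-periodic, set c_α(y) := A(y,α(y)) and p(y) := HM(c_α)/c_α(y). Suppose u : ℝ → ℝ is C² and 1-periodic and q, c ∈ ℝ satisfy sup_{β∈𝒜} ( −A(y,β)(q + u''(y)) + h(y,β) ) = c for every y. Then ∫₀¹ ( −A(y,α(y)) q + h(y,α(y)) ) p(y) dy ≤ c. -/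
/-!
Along the control `α` the cell equation gives `-c_α (q + u'') + h_α ≤ c` pointwise. Multiplying by
the density `p = HM(c_α)/c_α ≥ 0` turns the `u''` term into `HM(c_α) u''`, whose integral over a
period vanishes by periodicity of `u'`, while `∫₀¹ p = 1`.
-/

open MeasureTheory

/-- Harmonic mean of a 1-periodic function over one period:
`HM(b) = (∫₀¹ 1/b(y) dy)⁻¹`. -/
noncomputable def HM (b : ℝ → ℝ) : ℝ := (∫ y in (0:ℝ)..1, (b y)⁻¹)⁻¹

open Set

theorem HM_nonneg {b : ℝ → ℝ} (hb : ∀ y, 0 ≤ b y) : 0 ≤ HM b :=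
  inv_nonneg.2 <| intervalIntegral.integral_nonneg zero_le_one fun y _ => inv_nonneg.2 (hb y)

theorem integral_HM_div {b : ℝ → ℝ} (hb : ∫ y in (0:ℝ)..1, (b y)⁻¹ ≠ 0) :
    ∫ y in (0:ℝ)..1, HM b / b y = 1 := by
  simp only [div_eq_mul_inv, intervalIntegral.integral_const_mul, HM, inv_mul_cancel₀ hb]

theorem Function.Periodic.integral_deriv_eq_zero {f : ℝ → ℝ} {T : ℝ}
    (hper : Function.Periodic f T) (hf : ContDiff ℝ 1 f) (a : ℝ) : ∫ x in a..a + T, deriv f x = 0 := by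
  rw [intervalIntegral.integral_deriv_eq_sub
    (fun x _ => (hf.differentiable one_ne_zero).differentiableAt)
    ((hf.continuous_deriv le_rfl).intervalIntegrable _ _), hper, sub_self]

theorem Function.Periodic.integral_deriv_deriv_eq_zero {u : ℝ → ℝ} {T : ℝ}
    (hper : Function.Periodic u T) (hu : ContDiff ℝ 2 u) (a : ℝ) :
    ∫ x in a..a + T, deriv (deriv u) x = 0 := by
  refine Function.Periodic.integral_deriv_eq_zero (fun x => ?_) (hu.deriv' (n := 1)) a
  rw [← deriv_comp_add_const, show (fun y => u (y + T)) = u from funext hper]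

section ControlledCoefficient

variable {X : Type*} [TopologicalSpace X] [MeasurableSpace X] [OpensMeasurableSpace X]
  [SecondCountableTopology X] {K : Set X} {F : ℝ × X → ℝ} {α : ℝ → X}

theorem ContinuousOn.measurable_comp_prodMk (hF : ContinuousOn F (univ ×ˢ K))
    (hα : Measurable α) (hαK : ∀ y, α y ∈ K) : Measurable fun y => F (y, α y) :=
  have hgraph : Measurable fun y => (⟨(y, α y), trivial, hαK y⟩ : ↥(univ ×ˢ K)) :=
    (measurable_id.prodMk hα).subtype_mk
  (continuousOn_iff_continuous_domRestrict.mp hF).measurable.comp hgraph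

theorem ContinuousOn.intervalIntegrable_comp_prodMk (hK : IsCompact K)
    (hF : ContinuousOn F (univ ×ˢ K)) (hα : Measurable α) (hαK : ∀ y, α y ∈ K) (a b : ℝ) :
    IntervalIntegrable (fun y => F (y, α y)) volume a b := by
  obtain ⟨M, hM⟩ := (isCompact_uIcc.prod hK).exists_bound_of_continuousOn
    (hF.mono (prod_mono (subset_univ (uIcc a b)) le_rfl))
  refine (intervalIntegrable_const (c := M)).mono_fun'
    (hF.measurable_comp_prodMk hα hαK).aestronglyMeasurable ?_
  filter_upwards [ae_restrict_mem measurableSet_uIoc] with y hy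
  exact hM (y, α y) ⟨uIoc_subset_uIcc hy, hαK y⟩

end ControlledCoefficient

theorem integral_mul_HM_div_le {a g w : ℝ → ℝ} {q c : ℝ} (ha : ∀ y, 0 < a y)
    (hcell : ∀ y ∈ Icc (0:ℝ) 1, -a y * (q + w y) + g y ≤ c)
    (hw : ∫ y in (0:ℝ)..1, w y = 0) (hw_int : IntervalIntegrable w volume 0 1)
    (hinv_int : IntervalIntegrable (fun y => (a y)⁻¹) volume 0 1)
    (hint : IntervalIntegrable (fun y => (-a y * q + g y) * (HM a / a y)) volume 0 1) :
    ∫ y in (0:ℝ)..1, (-a y * q + g y) * (HM a / a y) ≤ c := by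
  have hHM : 0 ≤ HM a := HM_nonneg fun y => (ha y).le
  have hp_int : IntervalIntegrable (fun y => HM a / a y) volume 0 1 := by
    simpa only [div_eq_mul_inv] using hinv_int.const_mul (HM a)
  have hinv_pos : 0 < ∫ y in (0:ℝ)..1, (a y)⁻¹ :=
    intervalIntegral.intervalIntegral_pos_of_pos_on hinv_int (fun y _ => inv_pos.2 (ha y))
      zero_lt_one
  have hpt : ∀ y ∈ Icc (0:ℝ) 1,
      (-a y * q + g y) * (HM a / a y) ≤ c * (HM a / a y) + HM a * w y := by
    intro y hy
    have hscaled := mul_le_mul_of_nonneg_right (hcell y hy) (div_nonneg hHM (ha y).le)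
    have hsplit : (-a y * q + g y) * (HM a / a y)
        = (-a y * (q + w y) + g y) * (HM a / a y) + HM a * w y := by
      field_simp [(ha y).ne']
      ring
    linarith
  calc ∫ y in (0:ℝ)..1, (-a y * q + g y) * (HM a / a y)
      ≤ ∫ y in (0:ℝ)..1, c * (HM a / a y) + HM a * w y :=
        intervalIntegral.integral_mono_on zero_le_one hint
          ((hp_int.const_mul c).add (hw_int.const_mul _)) hpt
    _ = c := by
      rw [intervalIntegral.integral_add (hp_int.const_mul c) (hw_int.const_mul _),
        intervalIntegral.integral_const_mul, intervalIntegral.integral_const_mul,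
        integral_HM_div hinv_pos.ne', hw]
      ring

theorem stmt_2_general {m : ℕ}
    (𝓐 : Set (Fin m → ℝ)) (h𝓐 : IsCompact 𝓐)
    (A h : ℝ → (Fin m → ℝ) → ℝ)
    (hAcont : ContinuousOn (fun p : ℝ × (Fin m → ℝ) => A p.1 p.2) (Set.univ ×ˢ 𝓐))
    (hhcont : ContinuousOn (fun p : ℝ × (Fin m → ℝ) => h p.1 p.2) (Set.univ ×ˢ 𝓐))
    (lam Lam : ℝ) (hlam : 0 < lam)
    (hell : ∀ (y : ℝ), ∀ β ∈ 𝓐, lam ≤ A y β ∧ A y β ≤ Lam)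
    (α : ℝ → Fin m → ℝ) (hαmeas : Measurable α)
    (hαmem : ∀ y, α y ∈ 𝓐)
    (p : ℝ → ℝ) (hp : ∀ y, p y = HM (fun z => A z (α z)) / A y (α y))
    (u : ℝ → ℝ) (hu : ContDiff ℝ 2 u) (huper : ∀ y, u (y + 1) = u y)
    (q c : ℝ)
    (hcell : ∀ y : ℝ,
      sSup ((fun β => -A y β * (q + deriv (deriv u) y) + h y β) '' 𝓐) = c) :
    ∫ y in (0:ℝ)..1, (-A y (α y) * q + h y (α y)) * p y ≤ c := by
  have hApos : ∀ y, ∀ β ∈ 𝓐, 0 < A y β := fun y β hβ => hlam.trans_le (hell y β hβ).1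
  have hAne : ∀ x ∈ univ ×ˢ 𝓐, A x.1 x.2 ≠ 0 := fun x hx => (hApos x.1 x.2 hx.2).ne'
  have hcell_le : ∀ y, -A y (α y) * (q + deriv (deriv u) y) + h y (α y) ≤ c := by
    intro y
    have hslice : MapsTo (fun β => (y, β)) 𝓐 (univ ×ˢ 𝓐) := fun β hβ => ⟨trivial, hβ⟩
    have hcont : ContinuousOn (fun β => -A y β * (q + deriv (deriv u) y) + h y β) 𝓐 :=
      ((hAcont.comp (by fun_prop) hslice).neg.mul continuousOn_const).add
        (hhcont.comp (by fun_prop) hslice)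
    exact hcell y ▸ le_csSup (h𝓐.bddAbove_image hcont) ⟨α y, hαmem y, rfl⟩
  simp only [hp]
  refine integral_mul_HM_div_le (fun y => hApos y _ (hαmem y)) (fun y _ => hcell_le y)
    (by simpa using Function.Periodic.integral_deriv_deriv_eq_zero huper hu 0)
    (((hu.deriv' (n := 1)).continuous_deriv le_rfl).intervalIntegrable 0 1) ?_ ?_
  · exact (hAcont.inv₀ hAne).intervalIntegrable_comp_prodMk h𝓐 hαmeas hαmem 0 1
  · exact (((hAcont.neg.mul continuousOn_const).add hhcont).mul
      (continuousOn_const.div hAcont hAne)).intervalIntegrable_comp_prodMk h𝓐 hαmeas hαmem 0 1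

/-- One-dimensional inequality `L̄_α(q) ≤ H̄(q)`: the homogenized linearization of a convex
HJB operator about an admissible control `α(y)`, computed by averaging against the invariant
density `p = HM(c_α)/c_α`, is a lower bound for the homogenized nonlinear operator. -/
theorem stmt_2 {m : ℕ}
    (𝓐 : Set (Fin m → ℝ)) (h𝓐 : IsCompact 𝓐)
    (A h : ℝ → (Fin m → ℝ) → ℝ)
    (hAcont : ContinuousOn (fun p : ℝ × (Fin m → ℝ) => A p.1 p.2) (Set.univ ×ˢ 𝓐))
    (hhcont : ContinuousOn (fun p : ℝ × (Fin m → ℝ) => h p.1 p.2) (Set.univ ×ˢ 𝓐))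
    (hAper : ∀ (y : ℝ) (β : Fin m → ℝ), A (y + 1) β = A y β)
    (hhper : ∀ (y : ℝ) (β : Fin m → ℝ), h (y + 1) β = h y β)
    (lam Lam : ℝ) (hlam : 0 < lam)
    (hell : ∀ (y : ℝ), ∀ β ∈ 𝓐, lam ≤ A y β ∧ A y β ≤ Lam)
    (α : ℝ → Fin m → ℝ) (hαmeas : Measurable α) (hαper : ∀ y, α (y + 1) = α y)
    (hαmem : ∀ y, α y ∈ 𝓐)
    (p : ℝ → ℝ) (hp : ∀ y, p y = HM (fun z => A z (α z)) / A y (α y))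
    (u : ℝ → ℝ) (hu : ContDiff ℝ 2 u) (huper : ∀ y, u (y + 1) = u y)
    (q c : ℝ)
    (hcell : ∀ y : ℝ,
      sSup ((fun β => -A y β * (q + deriv (deriv u) y) + h y β) '' 𝓐) = c) :
    ∫ y in (0:ℝ)..1, (-A y (α y) * q + h y (α y)) * p y ≤ c :=
  stmt_2_general 𝓐 h𝓐 A h hAcont hhcont lam Lam hlam hell α hαmeas hαmem p hp u hu huper q c hcell
end

section
/- Let 𝒜 ⊆ ℝ^m be a compact set, let A : ℝ × 𝒜 → ℝ and h : ℝ × 𝒜 → ℝ be continuous, 1-periodic in the first variable, with 0 < λ ≤ A(y,β) ≤ Λ for all (y,β). Let α : ℝ → 𝒜 be measurable and 1-periodic, set c_α(y) := A(y,α(y)) and p(y) := HM(c_α)/c_α(y). Suppose u : ℝ → ℝ is C² and 1-periodic and q, c ∈ ℝ satisfy sup_{β∈𝒜} ( −A(y,β)(q + u''(y)) + h(y,β) ) = c for every y. If moreover the control α is optimal, i.e. −A(y,α(y))(q + u''(y)) + h(y,α(y)) = c for almost every y, then ∫₀¹ ( −A(y,α(y)) q + h(y,α(y)) ) p(y) dy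 = c. -/
open MeasureTheory

theorem Function.Periodic.deriv {𝕜 F : Type*} [NontriviallyNormedField 𝕜] [NormedAddCommGroup F]
    [NormedSpace 𝕜 F] {f : 𝕜 → F} {T : 𝕜} (hf : f.Periodic T) : (deriv f).Periodic T := by
  intro x
  rw [← deriv_comp_add_const, show (fun y => f (y + T)) = f from funext hf]

theorem Function.Periodic.integral_deriv_eq_zero_s3 {E : Type*} [NormedAddCommGroup E]
    [NormedSpace ℝ E] [CompleteSpace E] {f : ℝ → E} {T : ℝ} (hf : f.Periodic T)
    (hdiff : Differentiable ℝ f) (a : ℝ)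
    (hint : IntervalIntegrable (_root_.deriv f) volume a (a + T)) :
    ∫ y in a..a + T, _root_.deriv f y = 0 := by
  rw [intervalIntegral.integral_deriv_eq_sub (fun x _ => hdiff x) hint, hf, sub_self]

theorem ContinuousOn.measurable_comp {α X Y : Type*} [MeasurableSpace α] [TopologicalSpace X]
    [MeasurableSpace X] [OpensMeasurableSpace X] [TopologicalSpace Y] [MeasurableSpace Y]
    [BorelSpace Y] {g : X → Y} {s : Set X} (hg : ContinuousOn g s) {F : α → X}
    (hF : Measurable F) (hFs : ∀ a, F a ∈ s) : Measurable fun a => g (F a) :=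
  (continuousOn_iff_continuous_domRestrict.mp hg).measurable.comp (hF.subtype_mk (h := hFs))

theorem intervalIntegrable_inv_of_le {b : ℝ → ℝ} (hb : Measurable b) {lam : ℝ} (hlam : 0 < lam)
    (hle : ∀ y, lam ≤ b y) (a₁ a₂ : ℝ) : IntervalIntegrable (fun y => (b y)⁻¹) volume a₁ a₂ := by
  refine (intervalIntegrable_const (c := lam⁻¹)).mono_fun hb.inv.aestronglyMeasurable ?_
  refine .of_forall fun y => ?_
  have hpos : 0 < b y := hlam.trans_le (hle y)
  simp only [Real.norm_of_nonneg (inv_pos.mpr hpos).le, Real.norm_of_nonneg (inv_pos.mpr hlam).le]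
  exact inv_anti₀ hlam (hle y)

theorem integral_HM_div_eq_one {b : ℝ → ℝ} (hb : Measurable b) {lam : ℝ} (hlam : 0 < lam)
    (hle : ∀ y, lam ≤ b y) : ∫ y in (0:ℝ)..1, HM b / b y = 1 := by
  have hint := intervalIntegrable_inv_of_le hb hlam hle 0 1
  have hpos : 0 < ∫ y in (0:ℝ)..1, (b y)⁻¹ :=
    intervalIntegral.intervalIntegral_pos_of_pos hint
      (fun y => inv_pos.mpr (hlam.trans_le (hle y))) one_pos
  simp_rw [div_eq_mul_inv, intervalIntegral.integral_const_mul, HM]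
  exact inv_mul_cancel₀ hpos.ne'

theorem integral_mul_HM_div_eq {b f v : ℝ → ℝ} (hb : Measurable b) {lam : ℝ} (hlam : 0 < lam)
    (hle : ∀ y, lam ≤ b y) (hv : ContDiff ℝ 1 v) (hv_per : v.Periodic 1) {c : ℝ}
    (hf : ∀ᵐ y, f y = c + b y * deriv v y) :
    ∫ y in (0:ℝ)..1, f y * (HM b / b y) = c := by
  have hdensity_int : IntervalIntegrable (fun y => HM b / b y) volume 0 1 := by
    simpa only [div_eq_mul_inv] using
      (intervalIntegrable_inv_of_le hb hlam hle 0 1).const_mul (HM b)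
  have hv'_int : IntervalIntegrable (deriv v) volume 0 1 :=
    (hv.continuous_deriv le_rfl).intervalIntegrable _ _
  have hv'_mean : ∫ y in (0:ℝ)..1, deriv v y = 0 := by
    simpa using hv_per.integral_deriv_eq_zero_s3 (hv.differentiable one_ne_zero) 0
      (by simpa using hv'_int)
  have hf_eq : ∀ᵐ y, y ∈ Set.uIoc (0:ℝ) 1 →
      f y * (HM b / b y) = c * (HM b / b y) + HM b * deriv v y := by
    filter_upwards [hf] with y hy _
    rw [hy]
    field_simp [(hlam.trans_le (hle y)).ne']
  calc ∫ y in (0:ℝ)..1, f y * (HM b / b y)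
      = ∫ y in (0:ℝ)..1, (c * (HM b / b y) + HM b * deriv v y) :=
        intervalIntegral.integral_congr_ae hf_eq
    _ = c * (∫ y in (0:ℝ)..1, HM b / b y) + HM b * ∫ y in (0:ℝ)..1, deriv v y := by
        rw [intervalIntegral.integral_add (hdensity_int.const_mul c) (hv'_int.const_mul (HM b)),
          intervalIntegral.integral_const_mul, intervalIntegral.integral_const_mul]
    _ = c := by rw [integral_HM_div_eq_one hb hlam hle, hv'_mean, mul_one, mul_zero, add_zero]

theorem stmt_3_general {m : ℕ}
    (𝓐 : Set (Fin m → ℝ))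
    (A h : ℝ → (Fin m → ℝ) → ℝ)
    (hAcont : ContinuousOn (fun p : ℝ × (Fin m → ℝ) => A p.1 p.2) (Set.univ ×ˢ 𝓐))
    (lam Lam : ℝ) (hlam : 0 < lam)
    (hell : ∀ (y : ℝ), ∀ β ∈ 𝓐, lam ≤ A y β ∧ A y β ≤ Lam)
    (α : ℝ → Fin m → ℝ) (hαmeas : Measurable α)
    (hαmem : ∀ y, α y ∈ 𝓐)
    (p : ℝ → ℝ) (hp : ∀ y, p y = HM (fun z => A z (α z)) / A y (α y))
    (u : ℝ → ℝ) (hu : ContDiff ℝ 2 u) (huper : ∀ y, u (y + 1) = u y)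
    (q c : ℝ)
    (hopt : ∀ᵐ y ∂(volume : Measure ℝ),
      -A y (α y) * (q + deriv (deriv u) y) + h y (α y) = c) :
    ∫ y in (0:ℝ)..1, (-A y (α y) * q + h y (α y)) * p y = c := by
  obtain rfl : p = fun y => HM (fun z => A z (α z)) / A y (α y) := funext hp
  have hcα_meas : Measurable fun y => A y (α y) :=
    hAcont.measurable_comp (measurable_id.prodMk hαmeas) fun y => ⟨Set.mem_univ y, hαmem y⟩
  obtain ⟨-, -, hu' : ContDiff ℝ 1 (deriv u)⟩ := (contDiff_succ_iff_deriv (n := 1)).mp hu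
  refine integral_mul_HM_div_eq hcα_meas hlam (fun y => (hell y (α y) (hαmem y)).1) hu'
    (Function.Periodic.deriv huper) ?_
  filter_upwards [hopt] with y hy
  linarith

/-- Equality case of `L̄_α(q) ≤ H̄(q)` in one dimension: linearizing about an optimal control
(one realizing the supremum along the cell-problem solution a.e.) achieves the
homogenized value. -/
theorem stmt_3 {m : ℕ}
    (𝓐 : Set (Fin m → ℝ)) (h𝓐 : IsCompact 𝓐)
    (A h : ℝ → (Fin m → ℝ) → ℝ)
    (hAcont : ContinuousOn (fun p : ℝ × (Fin m → ℝ) => A p.1 p.2) (Set.univ ×ˢ 𝓐))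
    (hhcont : ContinuousOn (fun p : ℝ × (Fin m → ℝ) => h p.1 p.2) (Set.univ ×ˢ 𝓐))
    (hAper : ∀ (y : ℝ) (β : Fin m → ℝ), A (y + 1) β = A y β)
    (hhper : ∀ (y : ℝ) (β : Fin m → ℝ), h (y + 1) β = h y β)
    (lam Lam : ℝ) (hlam : 0 < lam)
    (hell : ∀ (y : ℝ), ∀ β ∈ 𝓐, lam ≤ A y β ∧ A y β ≤ Lam)
    (α : ℝ → Fin m → ℝ) (hαmeas : Measurable α) (hαper : ∀ y, α (y + 1) = α y)
    (hαmem : ∀ y, α y ∈ 𝓐)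
    (p : ℝ → ℝ) (hp : ∀ y, p y = HM (fun z => A z (α z)) / A y (α y))
    (u : ℝ → ℝ) (hu : ContDiff ℝ 2 u) (huper : ∀ y, u (y + 1) = u y)
    (q c : ℝ)
    (hcell : ∀ y : ℝ,
      sSup ((fun β => -A y β * (q + deriv (deriv u) y) + h y β) '' 𝓐) = c)
    (hopt : ∀ᵐ y ∂(volume : Measure ℝ),
      -A y (α y) * (q + deriv (deriv u) y) + h y (α y) = c) :
    ∫ y in (0:ℝ)..1, (-A y (α y) * q + h y (α y)) * p y = c :=
  stmt_3_general 𝓐 A h hAcont lam Lam hlam hell α hαmeas hαmem p hp u hu huper q c hopt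
end

section
/- Let a₀, a₁ : ℝ → ℝ be continuous, 1-periodic functions with a₀(y) > 0 and a₁(y) > 0 for all y, and let q, h ∈ ℝ. Then there exists a C², 1-periodic function u : ℝ → ℝ such that for every y ∈ ℝ, max{ a₀(y)(q + u''(y)), (a₀(y) + a₁(y))(q + u''(y)) } + h = max{ HM(a₀)·q, HM(a₀ + a₁)·q } + h. That is, the homogenization of the maximum of two linear operators in one dimension is the maximum of the two harmonic-mean homogenized operators, with a classical cell-problem solution. -/
open MeasureTheory

lemma integral_inv_pos_of (b : ℝ → ℝ) (hb : Continuous b) (hpos : ∀ y, 0 < b y) :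
    0 < ∫ y in (0:ℝ)..1, (b y)⁻¹ := by
  have hinv : Continuous fun y => (b y)⁻¹ := hb.inv₀ (fun y => (hpos y).ne')
  exact intervalIntegral.intervalIntegral_pos_of_pos (hinv.intervalIntegrable 0 1)
    (fun x => inv_pos.2 (hpos x)) one_pos

lemma HM_pos (b : ℝ → ℝ) (hb : Continuous b) (hpos : ∀ y, 0 < b y) : 0 < HM b :=
  inv_pos.2 (integral_inv_pos_of b hb hpos)

lemma HM_mono (b c : ℝ → ℝ) (hb : Continuous b) (hc : Continuous c)
    (hbpos : ∀ y, 0 < b y) (hcpos : ∀ y, 0 < c y) (hle : ∀ y, b y ≤ c y) :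
    HM b ≤ HM c := by
  have hbinv : Continuous fun y => (b y)⁻¹ := hb.inv₀ (fun y => (hbpos y).ne')
  have hcinv : Continuous fun y => (c y)⁻¹ := hc.inv₀ (fun y => (hcpos y).ne')
  have hI : (∫ y in (0:ℝ)..1, (c y)⁻¹) ≤ ∫ y in (0:ℝ)..1, (b y)⁻¹ :=
    intervalIntegral.integral_mono_on zero_le_one (hcinv.intervalIntegrable 0 1)
      (hbinv.intervalIntegrable 0 1)
      (fun x _ => inv_anti₀ (hbpos x) (hle x))
  exact inv_anti₀ (integral_inv_pos_of c hc hcpos) hI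

/-- Solution of the cell problem for a single linear operator `b(y)(q + u'')`. -/
lemma cell (b : ℝ → ℝ) (hb : Continuous b) (hper : ∀ y, b (y + 1) = b y)
    (hpos : ∀ y, 0 < b y) (q : ℝ) :
    ∃ u : ℝ → ℝ, ContDiff ℝ 2 u ∧ (∀ y, u (y + 1) = u y) ∧
      ∀ y, q + deriv (deriv u) y = HM b * q / b y := by
  have hbne : ∀ y, b y ≠ 0 := fun y => (hpos y).ne'
  have hinv : Continuous fun y => (b y)⁻¹ := hb.inv₀ hbne
  set g : ℝ → ℝ := fun y => HM b * q * (b y)⁻¹ - q with hg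
  have hgcont : Continuous g := ((continuous_const.mul hinv).sub continuous_const)
  have hgper : Function.Periodic g 1 := fun y => by simp [hg, hper y]
  have hI : 0 < ∫ y in (0:ℝ)..1, (b y)⁻¹ := integral_inv_pos_of b hb hpos
  have hg0 : (∫ y in (0:ℝ)..1, g y) = 0 := by
    have h1 : (∫ y in (0:ℝ)..1, g y)
        = (∫ y in (0:ℝ)..1, HM b * q * (b y)⁻¹) - ∫ y in (0:ℝ)..1, (q : ℝ) := by
      exact intervalIntegral.integral_sub
        ((continuous_const.mul hinv).intervalIntegrable 0 1)
        (intervalIntegrable_const)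
    rw [h1, intervalIntegral.integral_const_mul, intervalIntegral.integral_const]
    have : HM b * q * ∫ y in (0:ℝ)..1, (b y)⁻¹ = q := by
      rw [HM, mul_comm _ q, mul_assoc, inv_mul_cancel₀ hI.ne', mul_one]
    rw [this]; simp
  set v : ℝ → ℝ := fun y => ∫ t in (0:ℝ)..y, g t with hv
  have hvderiv : ∀ y, HasDerivAt v (g y) y := fun y =>
    (hgcont.integral_hasStrictDerivAt 0 y).hasDerivAt
  have hvcont : Continuous v :=
    continuous_iff_continuousAt.2 fun y => (hvderiv y).continuousAt
  have hvper : ∀ y, v (y + 1) = v y := by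
    intro y
    have hsplit : (∫ t in (0:ℝ)..y, g t) + (∫ t in y..(y+1), g t)
        = ∫ t in (0:ℝ)..(y+1), g t :=
      intervalIntegral.integral_add_adjacent_intervals
        (hgcont.intervalIntegrable 0 y) (hgcont.intervalIntegrable y (y+1))
    have hper' : (∫ t in y..(y+1), g t) = ∫ t in (0:ℝ)..(0+1:ℝ), g t :=
      hgper.intervalIntegral_add_eq y 0
    simp only [zero_add] at hper'
    rw [hper', hg0, add_zero] at hsplit
    simpa [hv] using hsplit.symm
  set C : ℝ := ∫ t in (0:ℝ)..1, v t with hC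
  set u : ℝ → ℝ := fun y => (∫ t in (0:ℝ)..y, v t) - C * y with hu
  have huderiv : ∀ y, HasDerivAt u (v y - C) y := by
    intro y
    have h1 : HasDerivAt (fun y => ∫ t in (0:ℝ)..y, v t) (v y) y :=
      (hvcont.integral_hasStrictDerivAt 0 y).hasDerivAt
    have h2 : HasDerivAt (fun y : ℝ => C * y) C y := by
      simpa using (hasDerivAt_id y).const_mul C
    exact h1.sub h2
  have hderivu : deriv u = fun y => v y - C := funext fun y => (huderiv y).deriv
  have hderiv2 : ∀ y, deriv (deriv u) y = g y := by
    intro y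
    rw [hderivu]
    exact ((hvderiv y).sub_const C).deriv
  refine ⟨u, ?_, ?_, ?_⟩
  · have h2 : (2 : WithTop ℕ∞) = 1 + 1 := by norm_num
    rw [h2, contDiff_succ_iff_deriv]
    refine ⟨fun y => (huderiv y).differentiableAt, by simp, ?_⟩
    rw [contDiff_one_iff_deriv]
    constructor
    · intro y
      rw [hderivu]
      exact ((hvderiv y).sub_const C).differentiableAt
    · have : deriv (deriv u) = g := funext hderiv2
      rw [this]
      exact hgcont
  · intro y
    have hsplit : (∫ t in (0:ℝ)..y, v t) + (∫ t in y..(y+1), v t)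
        = ∫ t in (0:ℝ)..(y+1), v t :=
      intervalIntegral.integral_add_adjacent_intervals
        (hvcont.intervalIntegrable 0 y) (hvcont.intervalIntegrable y (y+1))
    have hper' : (∫ t in y..(y+1), v t) = ∫ t in (0:ℝ)..(0+1:ℝ), v t :=
      Function.Periodic.intervalIntegral_add_eq hvper y 0
    simp only [zero_add] at hper'
    rw [hper'] at hsplit
    simp only [hu]
    rw [← hsplit, ← hC]
    ring
  · intro y
    rw [hderiv2 y]
    simp only [hg]
    rw [div_eq_mul_inv]
    ring

/-- Homogenization of the maximum of two linear operators in one dimension: the cell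
problem is solved classically and the homogenized operator is the maximum of the two
harmonic-mean homogenized operators. -/
theorem stmt_10 (a₀ a₁ : ℝ → ℝ) (h₀cont : Continuous a₀) (h₁cont : Continuous a₁)
    (h₀per : ∀ y, a₀ (y + 1) = a₀ y) (h₁per : ∀ y, a₁ (y + 1) = a₁ y)
    (h₀pos : ∀ y, 0 < a₀ y) (h₁pos : ∀ y, 0 < a₁ y) (q h : ℝ) :
    ∃ u : ℝ → ℝ, ContDiff ℝ 2 u ∧ (∀ y, u (y + 1) = u y) ∧
      ∀ y, max (a₀ y * (q + deriv (deriv u) y))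
            ((a₀ y + a₁ y) * (q + deriv (deriv u) y)) + h =
          max (HM a₀ * q) (HM (fun z => a₀ z + a₁ z) * q) + h := by
  set b : ℝ → ℝ := fun z => a₀ z + a₁ z with hb
  have hbcont : Continuous b := h₀cont.add h₁cont
  have hbper : ∀ y, b (y + 1) = b y := fun y => by simp [hb, h₀per y, h₁per y]
  have hbpos : ∀ y, 0 < b y := fun y => add_pos (h₀pos y) (h₁pos y)
  have hHM₀ : 0 < HM a₀ := HM_pos a₀ h₀cont h₀pos
  have hHMb : 0 < HM b := HM_pos b hbcont hbpos
  have hHMle : HM a₀ ≤ HM b :=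
    HM_mono a₀ b h₀cont hbcont h₀pos hbpos
      (fun y => le_add_of_nonneg_right (h₁pos y).le)
  rcases le_or_gt 0 q with hq | hq
  · -- q ≥ 0 : use the cell problem for b = a₀ + a₁
    obtain ⟨u, hu2, huper, hucell⟩ := cell b hbcont hbper hbpos q
    refine ⟨u, hu2, huper, fun y => ?_⟩
    have hp : q + deriv (deriv u) y = HM b * q / b y := hucell y
    have hpnonneg : 0 ≤ q + deriv (deriv u) y := by
      rw [hp]; exact div_nonneg (mul_nonneg hHMb.le hq) (hbpos y).le
    have hmaxL : max (a₀ y * (q + deriv (deriv u) y)) (b y * (q + deriv (deriv u) y))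
        = b y * (q + deriv (deriv u) y) :=
      max_eq_right (mul_le_mul_of_nonneg_right
        (le_add_of_nonneg_right (h₁pos y).le) hpnonneg)
    have hbval : b y * (q + deriv (deriv u) y) = HM b * q := by
      rw [hp, mul_div_assoc', mul_div_cancel_left₀ _ (hbpos y).ne']
    have hmaxR : max (HM a₀ * q) (HM b * q) = HM b * q :=
      max_eq_right (mul_le_mul_of_nonneg_right hHMle hq)
    rw [hmaxL, hbval, hmaxR]
  · -- q < 0 : use the cell problem for a₀
    obtain ⟨u, hu2, huper, hucell⟩ := cell a₀ h₀cont h₀per h₀pos q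
    refine ⟨u, hu2, huper, fun y => ?_⟩
    have hp : q + deriv (deriv u) y = HM a₀ * q / a₀ y := hucell y
    have hpnonpos : q + deriv (deriv u) y ≤ 0 := by
      rw [hp]
      exact div_nonpos_of_nonpos_of_nonneg
        (mul_nonpos_of_nonneg_of_nonpos hHM₀.le hq.le) (h₀pos y).le
    have hmaxL : max (a₀ y * (q + deriv (deriv u) y)) (b y * (q + deriv (deriv u) y))
        = a₀ y * (q + deriv (deriv u) y) :=
      max_eq_left (mul_le_mul_of_nonpos_right
        (le_add_of_nonneg_right (h₁pos y).le) hpnonpos)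
    have haval : a₀ y * (q + deriv (deriv u) y) = HM a₀ * q := by
      rw [hp, mul_div_assoc', mul_div_cancel_left₀ _ (h₀pos y).ne']
    have hmaxR : max (HM a₀ * q) (HM b * q) = HM a₀ * q :=
      max_eq_left (mul_le_mul_of_nonpos_right hHMle hq.le)
    rw [hmaxL, haval, hmaxR]
end

section
/- Let a, b₀ > 0, c ∈ ℝ, and q ≥ 0. Define g : ℝ → ℝ by g(α) = ( a(a + 2b₀α)/(a + b₀α) ) · ( q − (1/2)( c/a + (b₀α² + c)/(a + 2b₀α) ) ), and set α* := ( −a + √(a(a + 2b₀q)) )/b₀. Then α* ∈ [0, q], g(α) ≤ g(α*) for every α ∈ [0, q], and g(α*) = 2aq − c + a²/b₀ − (1/b₀)√( a³(a + 2b₀q) ). -/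
/-!
With `u = a + b₀α` and `s = √(a(a + 2b₀q))`, clearing denominators gives
`g(α) = 2aq − c + a²/b₀ − a(u² + s²)/(2b₀u)`. Since `u² + s² ≥ 2us`, the last term is at least
`as/b₀`, with equality exactly when `u = s`, i.e. at `α = α*`; and `a ≤ s ≤ a + b₀q` places `α*`
in `[0, q]`.
-/

open Real

namespace HomogenizedLinearization

variable {a b₀ c q α : ℝ}

noncomputable def value (a b₀ c q α : ℝ) : ℝ :=
  (a * (a + 2 * b₀ * α) / (a + b₀ * α)) *
    (q - (1/2) * (c / a + (b₀ * α ^ 2 + c) / (a + 2 * b₀ * α)))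

noncomputable def optimalControl (a b₀ q : ℝ) : ℝ :=
  (-a + √(a * (a + 2 * b₀ * q))) / b₀

theorem value_eq (ha : a ≠ 0) (hb₀ : b₀ ≠ 0) (hu : a + b₀ * α ≠ 0)
    (hv : a + 2 * b₀ * α ≠ 0) :
    value a b₀ c q α = 2 * a * q - c + a ^ 2 / b₀ -
      a * ((a + b₀ * α) ^ 2 + a * (a + 2 * b₀ * q)) / (2 * b₀ * (a + b₀ * α)) := by
  unfold value
  field_simp
  ring

theorem le_sq_add_sq_div_two_mul {u s : ℝ} (hu : 0 < u) : s ≤ (u ^ 2 + s ^ 2) / (2 * u) := by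
  rw [le_div_iff₀ (by positivity)]
  nlinarith [two_mul_le_add_sq u s]

theorem value_le (ha : 0 < a) (hb₀ : 0 < b₀) (hS : 0 ≤ a + 2 * b₀ * q) (hα : 0 ≤ α) :
    value a b₀ c q α ≤ 2 * a * q - c + a ^ 2 / b₀ - a * √(a * (a + 2 * b₀ * q)) / b₀ := by
  have hu : 0 < a + b₀ * α := by positivity
  rw [value_eq ha.ne' hb₀.ne' hu.ne' (by positivity)]
  set s := √(a * (a + 2 * b₀ * q))
  have hs : s ^ 2 = a * (a + 2 * b₀ * q) := sq_sqrt (by positivity)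
  rw [← hs]
  calc _ = 2 * a * q - c + a ^ 2 / b₀ -
        a / b₀ * (((a + b₀ * α) ^ 2 + s ^ 2) / (2 * (a + b₀ * α))) := by field_simp
    _ ≤ _ := by
      rw [mul_div_right_comm]
      gcongr
      exact le_sq_add_sq_div_two_mul hu

theorem add_mul_optimalControl (hb₀ : b₀ ≠ 0) :
    a + b₀ * optimalControl a b₀ q = √(a * (a + 2 * b₀ * q)) := by
  unfold optimalControl
  field_simp
  ring

theorem le_sqrt_mul_add (ha : 0 < a) (hb₀ : 0 < b₀) (hq : 0 ≤ q) :
    a ≤ √(a * (a + 2 * b₀ * q)) :=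
  le_sqrt_of_sq_le (by nlinarith [mul_nonneg (mul_pos ha hb₀).le hq])

theorem optimalControl_mem_Icc (ha : 0 < a) (hb₀ : 0 < b₀) (hq : 0 ≤ q) :
    optimalControl a b₀ q ∈ Set.Icc 0 q := by
  have hlow := le_sqrt_mul_add ha hb₀ hq
  have hup : √(a * (a + 2 * b₀ * q)) ≤ a + b₀ * q :=
    sqrt_le_iff.2 ⟨by positivity, by nlinarith [sq_nonneg (b₀ * q)]⟩
  unfold optimalControl
  constructor
  · exact div_nonneg (by linarith) hb₀.le
  · rw [div_le_iff₀ hb₀]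
    linarith

theorem value_optimalControl (ha : 0 < a) (hb₀ : 0 < b₀) (hq : 0 ≤ q) :
    value a b₀ c q (optimalControl a b₀ q) =
      2 * a * q - c + a ^ 2 / b₀ - a * √(a * (a + 2 * b₀ * q)) / b₀ := by
  have hu := add_mul_optimalControl (a := a) (q := q) hb₀.ne'
  have hsa := le_sqrt_mul_add ha hb₀ hq
  have hv : a + 2 * b₀ * optimalControl a b₀ q ≠ 0 := by linarith
  rw [value_eq ha.ne' hb₀.ne' (by linarith) hv, hu]
  set s := √(a * (a + 2 * b₀ * q))
  have hs : s ^ 2 = a * (a + 2 * b₀ * q) := sq_sqrt (by positivity)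
  rw [← hs]
  field_simp
  ring

end HomogenizedLinearization

theorem sqrt_pow_three_mul {a x : ℝ} (ha : 0 ≤ a) : √(a ^ 3 * x) = a * √(a * x) := by
  rw [show a ^ 3 * x = a ^ 2 * (a * x) by ring, sqrt_mul (sq_nonneg a), sqrt_sq ha]

open HomogenizedLinearization in
/-- Optimizing the homogenized linearization `g(α) = L̄_α(q)` of the one-dimensional
quadratic operator over the control `α ∈ [0,q]`: the maximizer is
`α* = (−a + √(a(a + 2b₀q)))/b₀`, and the optimal value is
`2aq − c + a²/b₀ − (1/b₀)√(a³(a + 2b₀q))`. -/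
theorem stmt_14 (a b₀ c q : ℝ) (ha : 0 < a) (hb₀ : 0 < b₀) (hq : 0 ≤ q)
    (g : ℝ → ℝ)
    (hg : ∀ α : ℝ, g α = (a * (a + 2 * b₀ * α) / (a + b₀ * α)) *
      (q - (1/2) * (c / a + (b₀ * α ^ 2 + c) / (a + 2 * b₀ * α))))
    (αstar : ℝ) (hαstar : αstar = (-a + Real.sqrt (a * (a + 2 * b₀ * q))) / b₀) :
    αstar ∈ Set.Icc 0 q ∧ (∀ α ∈ Set.Icc 0 q, g α ≤ g αstar) ∧
      g αstar = 2 * a * q - c + a ^ 2 / b₀ -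
        (1 / b₀) * Real.sqrt (a ^ 3 * (a + 2 * b₀ * q)) := by
  obtain rfl : g = value a b₀ c q := funext hg
  obtain rfl : αstar = optimalControl a b₀ q := hαstar
  refine ⟨optimalControl_mem_Icc ha hb₀ hq, fun α hα => ?_, ?_⟩
  · rw [value_optimalControl ha hb₀ hq]
    exact value_le ha hb₀ (by positivity) hα.1
  · rw [value_optimalControl ha hb₀ hq, sqrt_pow_three_mul ha.le]
    ring
end
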